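/- arXiv:1511.01126 — 4 statements merged into one kernel-verified Lean document; each statement's English description precedes it below -/
import Mathlib

section
/- Let m be a squarefree rational number and let K = ℚ(√m)(√α) where α = a + b√m with a, b ∈ ℚ, a ≠ 0, b ≠ 0, and [K : ℚ] = 4. Then K/ℚ is Galois with Gal(K/ℚ) cyclic of order 4 if and only if there exist nonzero rationals a, b (after rescaling) with a²/m − b² = 1; equivalently, a² − b²m = e²m for some e ∈ ℚ. -/
/-!
If `a² - b²m = e²m`, then `t' = e s / t` satisfies `t'² = a - b s`, so `t'` is a root of the
minimal polynomial `(X² - a)² - b²m` of `t`. The automorphism `t ↦ t'` sends `s ↦ -s`, hence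
`t' ↦ -t`, so it has order 4; since `#Aut(K/F) ≤ [K : F] = 4`, the extension is Galois with
cyclic group. Conversely, a generator `σ` of a cyclic Galois group of order 4 cannot fix `s`
(it would then fix `t²`, forcing `σ² = 1`), so `σ s = -s` and `σ² t = -t`. Then `t · σ t / s`
is fixed by `σ`, hence is some `e ∈ F`, and squaring gives `a² - b²m = e²m`.
-/

open Polynomial IntermediateField Module

section
variable {F K : Type*} [Field F] [Field K] [Algebra F K]

theorem AlgEquiv.eq_one_of_apply_eq_self_of_adjoin_eq_top {t : K} (hgen : F⟮t⟯ = ⊤)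
    {σ : K ≃ₐ[F] K} (hσ : σ t = t) : σ = 1 := by
  ext x
  have hx : x ∈ F⟮t⟯ := hgen ▸ mem_top
  induction hx using adjoin_induction with
  | mem y hy => rw [Set.mem_singleton_iff.mp hy, hσ]; rfl
  | algebraMap y => simp
  | add y z _ _ hy hz => simp_all
  | inv y _ hy => simp_all
  | mul y z _ _ hy hz => simp_all

theorem AlgEquiv.apply_eq_self_of_forall_mem_zpowers {σ : K ≃ₐ[F] K}
    (hσ : ∀ τ, τ ∈ Subgroup.zpowers σ) {x : K} (hx : σ x = x) (τ : K ≃ₐ[F] K) : τ x = x :=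
  Subgroup.zpowers_le.mpr (show σ ∈ MulAction.stabilizer _ x from hx) (hσ τ)

theorem sq_ne_algebraMap_of_adjoin_eq_top {t : K} (hK4 : finrank F K = 4) (hgen : F⟮t⟯ = ⊤)
    (c : F) : t ^ 2 ≠ algebraMap F K c := by
  intro hc
  have : FiniteDimensional F K := Module.finite_of_finrank_pos (by omega)
  have hdeg : (minpoly F t).natDegree = 4 := by
    rw [← adjoin.finrank (.of_finite F t), hgen, finrank_top', hK4]
  have hle := natDegree_le_of_dvd (minpoly.dvd F t (p := X ^ 2 - C c) (by simp [hc]))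
    (X_pow_sub_C_ne_zero two_pos c)
  rw [natDegree_X_pow_sub_C, hdeg] at hle
  omega

theorem AlgEquiv.apply_eq_neg_of_apply_sq_eq {t : K} (hgen : F⟮t⟯ = ⊤) {σ : K ≃ₐ[F] K}
    (hσ : σ ≠ 1) (h : σ (t ^ 2) = t ^ 2) : σ t = -t :=
  (sq_eq_sq_iff_eq_or_eq_neg.mp (by rwa [map_pow] at h)).resolve_left
    fun h ↦ hσ (eq_one_of_apply_eq_self_of_adjoin_eq_top hgen h)

theorem AlgEquiv.sq_eq_one_of_apply_sq_eq {t : K} (hgen : F⟮t⟯ = ⊤) {σ : K ≃ₐ[F] K}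
    (h : σ (t ^ 2) = t ^ 2) : σ ^ 2 = 1 := by
  by_cases hσ : σ = 1
  · rw [hσ, one_pow]
  refine eq_one_of_apply_eq_self_of_adjoin_eq_top hgen ?_
  rw [sq, mul_apply, apply_eq_neg_of_apply_sq_eq hgen hσ h, map_neg,
    apply_eq_neg_of_apply_sq_eq hgen hσ h, neg_neg]

theorem AlgEquiv.orderOf_eq_four_of_sq_apply_eq_neg [NeZero (2 : K)] {t : K}
    (hgen : F⟮t⟯ = ⊤) (ht0 : t ≠ 0) {σ : K ≃ₐ[F] K} (hσ : (σ ^ 2) t = -t) : orderOf σ = 4 := by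
  refine orderOf_eq_prime_pow (p := 2) (n := 1) (fun h ↦ ?_) ?_
  · rw [pow_one] at h
    rw [h, one_apply, eq_neg_iff_add_eq_zero, ← two_mul] at hσ
    exact ht0 ((mul_eq_zero.mp hσ).resolve_left two_ne_zero)
  · refine eq_one_of_apply_eq_self_of_adjoin_eq_top hgen ?_
    rw [show 2 ^ (1 + 1) = 2 + 2 by rfl, pow_add, mul_apply, hσ, map_neg, hσ, neg_neg]

theorem AlgEquiv.exists_apply_eq_of_aeval_minpoly_eq_zero [FiniteDimensional F K] {t t' : K}
    (hgen : F⟮t⟯ = ⊤) (ht' : aeval t' (minpoly F t) = 0) : ∃ σ : K ≃ₐ[F] K, σ t = t' := by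
  let pb : PowerBasis F K :=
    (adjoin.powerBasis (.of_finite F t)).map ((equivOfEq hgen).trans topEquiv)
  let σ : K →ₐ[F] K := pb.lift t' ht'
  exact ⟨.ofBijective σ (Algebra.IsAlgebraic.algHom_bijective σ), pb.lift_gen t' ht'⟩

theorem minpoly_eq_of_sq_eq {t : K} (hK4 : finrank F K = 4) (hgen : F⟮t⟯ = ⊤) {a c : F}
    (ht : (t ^ 2 - algebraMap F K a) ^ 2 = algebraMap F K c) :
    minpoly F t = (X ^ 2 - C a) ^ 2 - C c := by
  have : FiniteDimensional F K := Module.finite_of_finrank_pos (by omega)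
  have hmonic : ((X ^ 2 - C a) ^ 2 - C c).Monic := by monicity!
  have hdeg : ((X ^ 2 - C a) ^ 2 - C c).natDegree = 4 := by compute_degree!
  refine (eq_of_monic_of_dvd_of_natDegree_le (minpoly.monic (.of_finite F t)) hmonic
    (minpoly.dvd F t (by simp [ht])) ?_).symm
  rw [hdeg, ← adjoin.finrank (.of_finite F t), hgen, finrank_top', hK4]

variable {m a b : F} {s t : K}

theorem exists_sq_mul_of_isGalois_of_isCyclic [IsGalois F K] [IsCyclic (K ≃ₐ[F] K)]
    (hK4 : finrank F K = 4) (hgen : F⟮t⟯ = ⊤) (hs : s ^ 2 = algebraMap F K m)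
    (ht : t ^ 2 = algebraMap F K a + algebraMap F K b * s) :
    ∃ e : F, a ^ 2 - b ^ 2 * m = e ^ 2 * m := by
  have : FiniteDimensional F K := Module.finite_of_finrank_pos (by omega)
  obtain ⟨σ, hσ⟩ := IsCyclic.exists_generator (α := K ≃ₐ[F] K)
  have hσ2 : σ ^ 2 ≠ 1 := by
    intro h
    have := orderOf_dvd_of_pow_eq_one h
    rw [orderOf_eq_card_of_forall_mem_zpowers hσ, IsGalois.card_aut_eq_finrank, hK4] at this
    norm_num at this
  have hσs : σ s = -s := by
    refine (sq_eq_sq_iff_eq_or_eq_neg.mp (by rw [← map_pow, hs, AlgEquiv.commutes])).resolve_left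
      fun h ↦ hσ2 (AlgEquiv.sq_eq_one_of_apply_sq_eq hgen ?_)
    rw [ht, map_add, map_mul, h, AlgEquiv.commutes, AlgEquiv.commutes]
  have hσσt : σ (σ t) = -t := by
    refine AlgEquiv.apply_eq_neg_of_apply_sq_eq hgen hσ2 ?_
    rw [ht]
    simp only [sq, AlgEquiv.mul_apply, map_add, map_mul, AlgEquiv.commutes, hσs, map_neg, neg_neg]
  have hσt : σ t ^ 2 = algebraMap F K a - algebraMap F K b * s := by
    rw [← map_pow, ht, map_add, map_mul, hσs, AlgEquiv.commutes, AlgEquiv.commutes]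
    ring
  have hs0 : s ≠ 0 := fun h ↦ sq_ne_algebraMap_of_adjoin_eq_top hK4 hgen a (by simp [ht, h])
  obtain ⟨e, he⟩ : t * σ t / s ∈ Set.range (algebraMap F K) := by
    refine (IsGalois.mem_range_algebraMap_iff_fixed _).mpr
      (AlgEquiv.apply_eq_self_of_forall_mem_zpowers hσ ?_)
    rw [map_div₀, map_mul, hσσt, hσs]
    ring
  refine ⟨e, (algebraMap F K).injective ?_⟩
  rw [map_sub, map_mul, map_mul, map_pow, map_pow, map_pow, he, ← hs, div_pow,
    div_mul_cancel₀ _ (pow_ne_zero 2 hs0), mul_pow, ht, hσt]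
  ring

theorem isGalois_and_isCyclic_of_sq_mul [NeZero (2 : K)] (hK4 : finrank F K = 4)
    (hgen : F⟮t⟯ = ⊤) (hs : s ^ 2 = algebraMap F K m)
    (ht : t ^ 2 = algebraMap F K a + algebraMap F K b * s) {e : F}
    (he : a ^ 2 - b ^ 2 * m = e ^ 2 * m) : IsGalois F K ∧ IsCyclic (K ≃ₐ[F] K) := by
  have : FiniteDimensional F K := Module.finite_of_finrank_pos (by omega)
  have hnsq := sq_ne_algebraMap_of_adjoin_eq_top hK4 hgen
  have ht0 : t ≠ 0 := fun h ↦ hnsq 0 (by simp [h])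
  have hb : algebraMap F K b ≠ 0 := fun h ↦ hnsq a (by simp [ht, h])
  set t' := algebraMap F K e * s / t
  have htt' : t * t' = algebraMap F K e * s := mul_div_cancel₀ _ ht0
  have ht' : t' ^ 2 = algebraMap F K a - algebraMap F K b * s := by
    refine mul_left_cancel₀ (pow_ne_zero 2 ht0) ?_
    have he' := congrArg (algebraMap F K) he
    simp only [map_sub, map_mul, map_pow] at he'
    rw [← mul_pow, htt', mul_pow, hs, ← he', ht, ← hs]
    ring
  have ht'0 : t' ≠ 0 := fun h ↦ hnsq (2 * a) <| by
    rw [h] at ht'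
    rw [map_mul, map_ofNat]
    linear_combination ht + ht'
  have hp : minpoly F t = (X ^ 2 - C a) ^ 2 - C (b ^ 2 * m) :=
    minpoly_eq_of_sq_eq hK4 hgen (by rw [ht, map_mul, map_pow, ← hs]; ring)
  obtain ⟨σ, hσt⟩ := AlgEquiv.exists_apply_eq_of_aeval_minpoly_eq_zero hgen (t' := t') <| by
    simp only [hp, map_sub, map_pow, aeval_X, aeval_C, map_mul, ht', ← hs]
    ring
  have hσs : σ s = -s := by
    refine mul_left_cancel₀ hb ?_
    have h := congrArg σ ht
    rw [map_pow, hσt, ht', map_add, map_mul, AlgEquiv.commutes, AlgEquiv.commutes] at h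
    linear_combination -h
  have hσt' : σ t' = -t := by
    refine mul_left_cancel₀ ht'0 ?_
    have h := congrArg σ htt'
    rw [map_mul, map_mul, AlgEquiv.commutes, hσs, hσt] at h
    linear_combination h + htt'
  have hσ4 : orderOf σ = 4 := AlgEquiv.orderOf_eq_four_of_sq_apply_eq_neg hgen ht0
    (by rw [sq, AlgEquiv.mul_apply, hσt, hσt'])
  have hcard : Nat.card (K ≃ₐ[F] K) = 4 := le_antisymm
    (Nat.card_eq_fintype_card.trans_le (AlgEquiv.card_le.trans hK4.le)) (hσ4 ▸ orderOf_le_card)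
  exact ⟨IsGalois.of_card_aut_eq_finrank _ _ (hcard.trans hK4.symm),
    isCyclic_of_orderOf_eq_card σ (hσ4.trans hcard.symm)⟩

theorem isGalois_and_isCyclic_iff_exists_sq_mul [NeZero (2 : K)] (hK4 : finrank F K = 4)
    (hgen : F⟮t⟯ = ⊤) (hs : s ^ 2 = algebraMap F K m)
    (ht : t ^ 2 = algebraMap F K a + algebraMap F K b * s) :
    (IsGalois F K ∧ IsCyclic (K ≃ₐ[F] K)) ↔ ∃ e : F, a ^ 2 - b ^ 2 * m = e ^ 2 * m :=
  ⟨fun ⟨_, _⟩ ↦ exists_sq_mul_of_isGalois_of_isCyclic hK4 hgen hs ht,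
    fun ⟨_, he⟩ ↦ isGalois_and_isCyclic_of_sq_mul hK4 hgen hs ht he⟩

end

theorem stmt_0_general (m : ℤ) (a b : ℚ)
    (K : Type) [Field K] [NumberField K] (hK4 : Module.finrank ℚ K = 4)
    (s t : K) (hs : s ^ 2 = (m : K)) (ht : t ^ 2 = (a : K) + (b : K) * s)
    (hgen : IntermediateField.adjoin ℚ {t} = (⊤ : IntermediateField ℚ K)) :
    (IsGalois ℚ K ∧ IsCyclic (K ≃ₐ[ℚ] K)) ↔
      ∃ e : ℚ, a ^ 2 - b ^ 2 * (m : ℚ) = e ^ 2 * (m : ℚ) := by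
  have hs' : s ^ 2 = algebraMap ℚ K m := by simpa using hs
  have ht' : t ^ 2 = algebraMap ℚ K a + algebraMap ℚ K b * s := by simpa using ht
  exact isGalois_and_isCyclic_iff_exists_sq_mul hK4 hgen hs' ht'

/-- Criterion for a quartic field `K = ℚ(√m)(√(a + b√m))` (with `m` squarefree,
`a, b` nonzero rationals) to be Galois over `ℚ` with cyclic Galois group of order 4:
this happens if and only if `a² - b²m = e²m` for some rational `e`. -/
theorem stmt_0 (m : ℤ) (hm : Squarefree m) (a b : ℚ) (ha : a ≠ 0) (hb : b ≠ 0)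
    (K : Type) [Field K] [NumberField K] (hK4 : Module.finrank ℚ K = 4)
    (s t : K) (hs : s ^ 2 = (m : K)) (ht : t ^ 2 = (a : K) + (b : K) * s)
    (hgen : IntermediateField.adjoin ℚ {t} = (⊤ : IntermediateField ℚ K)) :
    (IsGalois ℚ K ∧ IsCyclic (K ≃ₐ[ℚ] K)) ↔
      ∃ e : ℚ, a ^ 2 - b ^ 2 * (m : ℚ) = e ^ 2 * (m : ℚ) :=
  stmt_0_general m a b K hK4 s t hs ht hgen
end

section
/- Let K be a cyclic quartic extension of ℚ. Then ℚ(i) is not contained in K and ℚ(√−3) is not contained in K. -/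
/-!
Complex conjugation restricted to `K` is an automorphism `σ` with `σ ^ 2 = 1`. In a cyclic group
whose order is divisible by `4` such an element is a square `τ ^ 2`. But every automorphism `τ`
sends a square root `x` of a rational number to `± x`, so `τ ^ 2` fixes `x`. Hence complex
conjugation fixes `x`, its complex images are real, and `x ^ 2` is a nonnegative rational.
-/

open NumberField ComplexEmbedding

lemma IsCyclic.exists_sq_eq_of_sq_eq_one {G : Type*} [Group G] [IsCyclic G]
    (h4 : 4 ∣ Nat.card G) {g : G} (hg : g ^ 2 = 1) : ∃ h : G, h ^ 2 = g := by
  obtain ⟨a, ha⟩ := IsCyclic.exists_generator (α := G)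
  obtain ⟨k, rfl⟩ := ha g
  have hk : (Nat.card G : ℤ) ∣ 2 * k := by
    rw [← orderOf_eq_card_of_forall_mem_zpowers ha, orderOf_dvd_iff_zpow_eq_one, mul_comm,
      zpow_mul]
    exact_mod_cast hg
  have h4k : (4 : ℤ) ∣ 2 * k := (Int.natCast_dvd_natCast.mpr h4).trans hk
  obtain ⟨m, rfl⟩ : (2 : ℤ) ∣ k := by omega
  exact ⟨a ^ m, by rw [← zpow_natCast, ← zpow_mul]; ring_nf⟩

lemma AlgEquiv.sq_apply_eq_self_of_sq_eq_algebraMap {F L : Type*} [Field F] [Field L]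
    [Algebra F L] (τ : L ≃ₐ[F] L) {x : L} {c : F} (hx : x ^ 2 = algebraMap F L c) :
    (τ ^ 2) x = x := by
  have : τ x = x ∨ τ x = -x := by
    rw [← sq_eq_sq_iff_eq_or_eq_neg, ← map_pow, hx, AlgEquiv.commutes]
  rcases this with h | h <;> simp [pow_two, h]

lemma NumberField.ComplexEmbedding.exists_isConj_of_isGalois_rat {K : Type*} [Field K]
    [Algebra ℚ K] [IsGalois ℚ K] (φ : K →+* ℂ) : ∃ σ : Gal(K/ℚ), IsConj φ σ := by
  -- `φ` and its conjugate agree on `ℚ`, as there is only one ring map `ℚ →+* ℂ`.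
  obtain ⟨σ, hσ⟩ :=
    exists_comp_symm_eq_of_comp_eq (k := ℚ) φ (conjugate φ) (Subsingleton.elim _ _)
  exact ⟨σ.symm, hσ.symm⟩

lemma NumberField.ComplexEmbedding.IsConj.sq_eq_one {K k : Type*} [Field K] [Field k]
    [Algebra k K] {φ : K →+* ℂ} {σ : Gal(K/k)} (hσ : IsConj φ σ) : σ ^ 2 = 1 :=
  AlgEquiv.ext fun x ↦ by simpa [pow_two] using isConj_apply_apply hσ x

lemma NumberField.ComplexEmbedding.IsConj.re_eq_of_apply_eq {K k : Type*} [Field K] [Field k]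
    [Algebra k K] {φ : K →+* ℂ} {σ : Gal(K/k)} (hσ : IsConj φ σ) {x : K} (hx : σ x = x) :
    ((φ x).re : ℂ) = φ x := by
  rw [← Complex.conj_eq_iff_re, ← Complex.star_def, ← hσ.eq, hx]

theorem NumberField.nonneg_of_sq_eq_algebraMap_of_isCyclic {K : Type*} [Field K] [NumberField K]
    [IsGalois ℚ K] [IsCyclic Gal(K/ℚ)] (h4 : 4 ∣ Module.finrank ℚ K) {x : K} {c : ℚ}
    (hx : x ^ 2 = algebraMap ℚ K c) : 0 ≤ c := by
  obtain ⟨φ⟩ : Nonempty (K →+* ℂ) := inferInstance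
  obtain ⟨σ, hσ⟩ := exists_isConj_of_isGalois_rat φ
  obtain ⟨τ, rfl⟩ := IsCyclic.exists_sq_eq_of_sq_eq_one
    (by rwa [IsGalois.card_aut_eq_finrank]) hσ.sq_eq_one
  have hfix : (τ ^ 2) x = x := τ.sq_apply_eq_self_of_sq_eq_algebraMap hx
  have hc : ((c : ℝ) : ℂ) = (((φ x).re ^ 2 : ℝ) : ℂ) := by
    rw [Complex.ofReal_pow, hσ.re_eq_of_apply_eq hfix, ← map_pow, hx]
    simp
  have hc : (c : ℝ) = (φ x).re ^ 2 := by exact_mod_cast hc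
  exact_mod_cast hc ▸ sq_nonneg _

/-- A cyclic quartic extension of `ℚ` contains neither `ℚ(i)` nor `ℚ(√-3)`:
no element of `K` squares to `-1` or to `-3`. -/
theorem stmt_2 (K : Type) [Field K] [NumberField K] (h4 : Module.finrank ℚ K = 4)
    [IsGalois ℚ K] (hcyc : IsCyclic (K ≃ₐ[ℚ] K)) :
    (∀ x : K, x ^ 2 ≠ -1) ∧ (∀ x : K, x ^ 2 ≠ -3) := by
  have h4 : 4 ∣ Module.finrank ℚ K := h4.symm.dvd
  refine ⟨fun x hx ↦ ?_, fun x hx ↦ ?_⟩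
  · have := nonneg_of_sq_eq_algebraMap_of_isCyclic h4 (x := x) (c := -1) (by simp [hx])
    norm_num at this
  · have := nonneg_of_sq_eq_algebraMap_of_isCyclic h4 (x := x) (c := -3) (by simp [hx])
    norm_num at this
end

section
/- Let K be a field of characteristic not 2 or 3 and E : y² = (x−α)(x−β)(x−γ) an elliptic curve with α, β, γ ∈ K. For P = (x, y) ∈ E(K), there exists Q ∈ E(K) with 2Q = P if and only if x−α, x−β, and x−γ are all squares in K. -/
/-!
A point `P = (x, y)` equals `2Q` exactly when `x` is the `X`-coordinate of the tangential double of
an affine point `(x₀, y₀)` with `y₀ ≠ 0`; replacing `Q` by `-Q` takes care of the sign of `y`.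
If `λ` is the tangent slope, so that `2 y₀ λ = f'(x₀)` for `f = (X - α)(X - β)(X - γ)`, then
`x - α = λ² + β + γ - 2 x₀`, and eliminating `λ` with `y₀² = f(x₀)` gives
`x - α = (((x₀ - α)² - (α - β)(α - γ)) / (2 y₀))²`; likewise for `β` and `γ`.
Conversely, if `x - α = r²`, `x - β = s²`, `x - γ = t²`, then `x₀ = x + rs + st + tr` satisfies
`x₀ - α = (r + s)(r + t)` and its cyclic variants, so `y₀ = (r + s)(s + t)(t + r)` gives a point of
the curve, nonzero because the roots are distinct, whose tangent slope is `r + s + t` and whose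
double has `X`-coordinate `x`.
-/

open WeierstrassCurve Affine

namespace WeierstrassCurve.Affine

variable {F : Type*} [Field F] [DecidableEq F] {W : Affine F}

lemma exists_two_nsmul_eq_some_iff {x y : F} (h : W.Nonsingular x y) :
    (∃ Q : W.Point, 2 • Q = Point.some _ _ h) ↔
      ∃ x₀ y₀, W.Nonsingular x₀ y₀ ∧ y₀ ≠ W.negY x₀ y₀ ∧
        W.addX x₀ x₀ (W.slope x₀ x₀ y₀ y₀) = x := by
  constructor
  · rintro ⟨_ | @⟨x₀, y₀, h₀⟩, hQ⟩
    · exact absurd hQ.symm (Point.some_ne_zero h)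
    by_cases hy₀ : y₀ = W.negY x₀ y₀
    · rw [two_nsmul, Point.add_self_of_Y_eq hy₀] at hQ
      exact absurd hQ.symm (Point.some_ne_zero h)
    · rw [two_nsmul, Point.add_self_of_Y_ne hy₀] at hQ
      exact ⟨x₀, y₀, h₀, hy₀, (Point.some.inj hQ).1⟩
  · rintro ⟨x₀, y₀, h₀, hy₀, hx⟩
    have hdouble : Point.some _ _ h₀ + Point.some _ _ h₀ = Point.some _ _ _ :=
      Point.add_self_of_Y_ne hy₀
    rcases Point.X_eq_iff.mp hx.symm with hP | hP
    · exact ⟨Point.some _ _ h₀, by rw [two_nsmul, hdouble, hP]⟩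
    · exact ⟨-Point.some _ _ h₀, by rw [two_nsmul, ← neg_add, hdouble, hP]⟩

end WeierstrassCurve.Affine

section ofRoots

variable {K : Type*} [Field K] {α β γ : K}

lemma isSquare_sub_of_tangent_double (h2 : (2 : K) ≠ 0) {x₀ y₀ l x : K} (hy₀ : y₀ ≠ 0)
    (heq : y₀ ^ 2 = (x₀ - α) * (x₀ - β) * (x₀ - γ))
    (hl : 2 * y₀ * l = (x₀ - α) * (x₀ - β) + (x₀ - β) * (x₀ - γ) + (x₀ - γ) * (x₀ - α))
    (hx : x = l ^ 2 + (α + β + γ) - x₀ - x₀) :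
    IsSquare (x - α) := by
  have h2y : 2 * y₀ ≠ 0 := mul_ne_zero h2 hy₀
  refine ⟨((x₀ - α) ^ 2 - (α - β) * (α - γ)) / (2 * y₀), ?_⟩
  rw [div_mul_div_comm, eq_div_iff (mul_ne_zero h2y h2y)]
  linear_combination (l * (2 * y₀) + (x₀ - α) * (x₀ - β) + (x₀ - β) * (x₀ - γ) +
    (x₀ - γ) * (x₀ - α)) * hl + 4 * (β + γ - 2 * x₀) * heq + 4 * y₀ ^ 2 * hx

/-- The curve `y² = (x - α)(x - β)(x - γ)`. -/
def WeierstrassCurve.Affine.ofRoots (α β γ : K) : Affine K :=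
  { a₁ := 0, a₂ := -(α + β + γ), a₃ := 0, a₄ := α * β + β * γ + γ * α, a₆ := -(α * β * γ) }

namespace WeierstrassCurve.Affine.ofRoots

lemma equation_iff {x y : K} :
    (ofRoots α β γ).Equation x y ↔ y ^ 2 = (x - α) * (x - β) * (x - γ) := by
  rw [Affine.equation_iff]
  simp only [ofRoots]
  constructor <;> intro h <;> linear_combination h

lemma negY (x y : K) : (ofRoots α β γ).negY x y = -y := by
  simp [Affine.negY, ofRoots]

lemma Y_ne_negY_iff (h2 : (2 : K) ≠ 0) {x y : K} : y ≠ (ofRoots α β γ).negY x y ↔ y ≠ 0 := by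
  rw [negY]
  refine not_congr ⟨fun hy ↦ ?_, fun hy ↦ by rw [hy, neg_zero]⟩
  exact (mul_eq_zero.mp (by linear_combination hy : 2 * y = 0)).resolve_left h2

lemma addX (x₁ x₂ l : K) : (ofRoots α β γ).addX x₁ x₂ l = l ^ 2 + (α + β + γ) - x₁ - x₂ := by
  simp only [Affine.addX, ofRoots]
  ring

variable [DecidableEq K]

lemma two_mul_mul_slope_self (h2 : (2 : K) ≠ 0) {x y : K} (hy : y ≠ 0) :
    2 * y * (ofRoots α β γ).slope x x y y =
      (x - α) * (x - β) + (x - β) * (x - γ) + (x - γ) * (x - α) := by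
  rw [slope_of_Y_ne rfl ((Y_ne_negY_iff h2).mpr hy), negY, sub_neg_eq_add, ← two_mul,
    mul_div_cancel₀ _ (mul_ne_zero h2 hy)]
  simp only [ofRoots]
  ring

lemma isSquare_sub_of_addX_slope_self_eq (h2 : (2 : K) ≠ 0) {x₀ y₀ x : K}
    (h₀ : (ofRoots α β γ).Equation x₀ y₀) (hy₀ : y₀ ≠ (ofRoots α β γ).negY x₀ y₀)
    (hx : (ofRoots α β γ).addX x₀ x₀ ((ofRoots α β γ).slope x₀ x₀ y₀ y₀) = x) :
    IsSquare (x - α) ∧ IsSquare (x - β) ∧ IsSquare (x - γ) := by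
  rw [Y_ne_negY_iff h2] at hy₀
  rw [equation_iff] at h₀
  have hl := two_mul_mul_slope_self (α := α) (β := β) (γ := γ) h2 hy₀ (x := x₀)
  rw [addX] at hx
  set l := (ofRoots α β γ).slope x₀ x₀ y₀ y₀
  refine ⟨isSquare_sub_of_tangent_double h2 hy₀ h₀ hl hx.symm,
    isSquare_sub_of_tangent_double (α := β) (β := α) (γ := γ) (x₀ := x₀) (l := l) h2 hy₀
      (by linear_combination h₀) (by linear_combination hl) (by linear_combination -hx),
    isSquare_sub_of_tangent_double (α := γ) (β := β) (γ := α) (x₀ := x₀) (l := l) h2 hy₀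
      (by linear_combination h₀) (by linear_combination hl) (by linear_combination -hx)⟩

lemma exists_addX_slope_self_eq (h2 : (2 : K) ≠ 0) (hαβ : α ≠ β) (hβγ : β ≠ γ) (hαγ : α ≠ γ)
    {x r s t : K} (hr : x - α = r * r) (hs : x - β = s * s) (ht : x - γ = t * t) :
    ∃ x₀ y₀, (ofRoots α β γ).Nonsingular x₀ y₀ ∧ y₀ ≠ (ofRoots α β γ).negY x₀ y₀ ∧
      (ofRoots α β γ).addX x₀ x₀ ((ofRoots α β γ).slope x₀ x₀ y₀ y₀) = x := by
  set x₀ := x + (r * s + s * t + t * r)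
  set y₀ := (r + s) * (s + t) * (t + r)
  have hα : x₀ - α = (r + s) * (t + r) := by linear_combination hr
  have hβ : x₀ - β = (r + s) * (s + t) := by linear_combination hs
  have hγ : x₀ - γ = (s + t) * (t + r) := by linear_combination ht
  have hy₀ : y₀ ≠ 0 := by
    refine mul_ne_zero (mul_ne_zero ?_ ?_) ?_ <;> intro h0
    exacts [hαβ (by linear_combination (s - r) * h0 + hs - hr),
      hβγ (by linear_combination (t - s) * h0 + ht - hs),
      hαγ (by linear_combination (t - r) * h0 + ht - hr)]
  have h₀ : (ofRoots α β γ).Equation x₀ y₀ := equation_iff.mpr (by rw [hα, hβ, hγ]; ring)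
  have hslope : (ofRoots α β γ).slope x₀ x₀ y₀ y₀ = r + s + t :=
    mul_left_cancel₀ (mul_ne_zero h2 hy₀)
      (by rw [two_mul_mul_slope_self h2 hy₀, hα, hβ, hγ]; ring)
  refine ⟨x₀, y₀, (nonsingular_iff _ _).mpr ⟨h₀, Or.inr ((Y_ne_negY_iff h2).mpr hy₀)⟩,
    (Y_ne_negY_iff h2).mpr hy₀, ?_⟩
  rw [hslope, addX]
  linear_combination -hr - hs - ht

end WeierstrassCurve.Affine.ofRoots

end ofRoots

open Classical in
/-- Knapp's halving criterion: for `E : y² = (x-α)(x-β)(x-γ)` over a field `K` of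
characteristic not 2 or 3 and a point `P = (x, y) ∈ E(K)`, there is `Q ∈ E(K)` with
`2Q = P` if and only if `x-α`, `x-β`, `x-γ` are all squares in `K`. -/
theorem stmt_6 (K : Type) [Field K] (h2 : (2 : K) ≠ 0) (h3 : (3 : K) ≠ 0)
    (α β γ x y : K) (hαβ : α ≠ β) (hβγ : β ≠ γ) (hαγ : α ≠ γ)
    (W : WeierstrassCurve.Affine K)
    (hW : W = { a₁ := 0, a₂ := -(α + β + γ), a₃ := 0,
                a₄ := α * β + β * γ + γ * α, a₆ := -(α * β * γ) })
    (h : W.Nonsingular x y) :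
    (∃ Q : W.Point, 2 • Q = WeierstrassCurve.Affine.Point.some _ _ h) ↔
      (IsSquare (x - α) ∧ IsSquare (x - β) ∧ IsSquare (x - γ)) := by
  subst hW
  rw [exists_two_nsmul_eq_some_iff]
  constructor
  · rintro ⟨x₀, y₀, h₀, hy₀, hx⟩
    exact ofRoots.isSquare_sub_of_addX_slope_self_eq h2 h₀.1 hy₀ hx
  · rintro ⟨⟨r, hr⟩, ⟨s, hs⟩, ⟨t, ht⟩⟩
    exact ofRoots.exists_addX_slope_self_eq h2 hαβ hβγ hαγ hr hs ht
end

section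
/- Let E : y² = x(x² + bx + c) be an elliptic curve over ℚ with c a rational square, so that E has a ℚ-rational point P = (d, y₀) of order 4 with d² = c. Suppose m := b² − 4c is not a rational square and P is halved in a cyclic quartic extension K of ℚ containing F = ℚ(√m). Then 3d² ± 10td − 5t² = 0 for some t ∈ ℚ with m = 20t², which has no solution with d ∈ ℚ, d ≠ 0; hence no such configuration exists. -/
/-!
Let `σ` generate `Gal(K/ℚ) ≅ ℤ/4`, and put `m = b² - 4d²`, `α = 2d + 2b - 2√m`,
`ᾱ = 2d + 2b + 2√m`. As `m` is not a square, `σ √m = -√m`, so `σ √α = ±√ᾱ`, and `t = √α √ᾱ`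
has `t² = N(α) = 4d(5d + 2b)`. If `σ t = t` then `σ²` fixes `√m`, `√d`, `√α` and `√ᾱ`, hence
all of `K`, which is absurd. So `σ t = -t`, `t √m` is rational, and `m N(α)` is a rational
square. Writing `m s² = N(α)` and solving for `b` shows that `(s² + 1)(s² + 4)` is a
rational square. Clearing denominators gives coprime `p, q` with `p² + q²` and `p² + 4q²` both
squares (Euler's concordant forms for the pair `1, 4`), and the two Pythagorean triangles
`(p, q)`, `(p, 2q)` admit an infinite descent unless `s = 0`. Then `b = -5d/2` and
`m = (3d/2)²`, a contradiction.
-/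

theorem three_dvd_and_three_dvd_of_three_dvd_sq_add_sq {a b : ℤ} (h : 3 ∣ a ^ 2 + b ^ 2) :
    3 ∣ a ∧ 3 ∣ b := by
  have key : ∀ x y : ZMod 3, x ^ 2 + y ^ 2 = 0 → x = 0 ∧ y = 0 := by decide
  simpa only [ZMod.intCast_zmod_eq_zero_iff_dvd, Nat.cast_ofNat] using
    key a b (by exact_mod_cast (ZMod.intCast_zmod_eq_zero_iff_dvd _ 3).mpr h)

theorem isCoprime_sq_add_sq_sq_add_four_mul_sq {a b : ℤ} (h : IsCoprime a b) :
    IsCoprime (a ^ 2 + b ^ 2) (a ^ 2 + 4 * b ^ 2) := by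
  have h3 : IsCoprime (a ^ 2 + b ^ 2) 3 := by
    refine (Int.prime_three.coprime_iff_not_dvd.mpr fun h3 => ?_).symm
    obtain ⟨ha, hb⟩ := three_dvd_and_three_dvd_of_three_dvd_sq_add_sq h3
    exact Int.prime_three.not_isUnit (h.isUnit_of_dvd' ha hb)
  have hb : IsCoprime (a ^ 2 + b ^ 2) (b ^ 2) := by
    simpa using (h.pow (m := 2) (n := 2)).add_mul_left_left 1
  have h4 := (h3.mul_right hb).add_mul_left_right 1
  rwa [show 3 * b ^ 2 + (a ^ 2 + b ^ 2) * 1 = a ^ 2 + 4 * b ^ 2 by ring] at h4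

theorem Int.eq_of_mul_eq_mul_of_isCoprime {a b x y : ℤ} (h : a * x = b * y)
    (hab : IsCoprime a b) (hxy : IsCoprime x y) (hx : 0 ≤ x) (hb : 0 ≤ b) : x = b :=
  Int.dvd_antisymm hx hb (hxy.dvd_of_dvd_mul_right ⟨a, by rw [← h, mul_comm]⟩)
    (hab.symm.dvd_of_dvd_mul_left ⟨y, h⟩)

theorem exists_eq_mul_of_mul_eq_mul {α : Type*} [CommMonoidWithZero α] [IsCancelMulZero α]
    [DecompositionMonoid α] {m n u v : α} (hu : u ≠ 0) (h : m * n = u * v) :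
    ∃ a b c d, m = a * b ∧ n = c * d ∧ u = a * c ∧ v = b * d := by
  obtain ⟨a, c, ⟨b, rfl⟩, ⟨d, rfl⟩, rfl⟩ := exists_dvd_and_dvd_of_dvd_mul (⟨v, h⟩ : u ∣ m * n)
  exact ⟨a, b, c, d, rfl, rfl, rfl, mul_left_cancel₀ hu (by rw [← h, mul_mul_mul_comm])⟩

theorem exists_sq_add_sq_eq_sq_of_mul_eq_mul {m n u v : ℤ} (hu : u ≠ 0) (hmn : IsCoprime m n)
    (huv : IsCoprime u v) (hmul : m * n = u * v) (hsq : m ^ 2 - 4 * n ^ 2 = u ^ 2 - v ^ 2) :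
    ∃ a b c d : ℤ, m = a * b ∧ n = c * d ∧ IsCoprime a d ∧
      a ^ 2 + d ^ 2 = c ^ 2 ∧ a ^ 2 + 4 * d ^ 2 = b ^ 2 := by
  obtain ⟨a, b, c, d, rfl, rfl, rfl, rfl⟩ := exists_eq_mul_of_mul_eq_mul hu hmul
  have hbc : IsCoprime b c :=
    (hmn.of_isCoprime_of_dvd_left (dvd_mul_left b a)).of_isCoprime_of_dvd_right
      (dvd_mul_right c d)
  have had : IsCoprime a d :=
    (huv.of_isCoprime_of_dvd_left (dvd_mul_right a c)).of_isCoprime_of_dvd_right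
      (dvd_mul_left d b)
  have hkey : b ^ 2 * (a ^ 2 + d ^ 2) = c ^ 2 * (a ^ 2 + 4 * d ^ 2) := by linear_combination hsq
  have hcop := isCoprime_sq_add_sq_sq_add_four_mul_sq had
  exact ⟨a, b, c, d, rfl, rfl, had,
    Int.eq_of_mul_eq_mul_of_isCoprime hkey hbc.pow hcop (by positivity) (by positivity),
    Int.eq_of_mul_eq_mul_of_isCoprime hkey.symm hbc.symm.pow hcop.symm (by positivity)
      (by positivity)⟩

structure ConcordantSolution where
  p : ℤ
  q : ℤ
  z : ℤ
  w : ℤ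
  p_ne_zero : p ≠ 0
  q_ne_zero : q ≠ 0
  isCoprime : IsCoprime p q
  sq_add_sq : p ^ 2 + q ^ 2 = z ^ 2
  sq_add_four_mul_sq : p ^ 2 + 4 * q ^ 2 = w ^ 2

namespace ConcordantSolution

variable (s : ConcordantSolution)

theorem exists_natAbs_z_lt_of_even (hp : Even s.p) :
    ∃ s' : ConcordantSolution, s'.z.natAbs < s.z.natAbs := by
  obtain ⟨P, hP⟩ := even_iff_two_dvd.mp hp
  have hw : 2 ∣ s.w := by
    rw [← Int.pow_dvd_pow_iff two_ne_zero, ← s.sq_add_four_mul_sq, hP]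
    exact ⟨P ^ 2 + s.q ^ 2, by ring⟩
  obtain ⟨W, hW⟩ := hw
  have hP0 : P ≠ 0 := by rintro rfl; exact s.p_ne_zero (by simpa using hP)
  have hz := s.sq_add_sq
  have hw := s.sq_add_four_mul_sq
  rw [hP] at hz hw
  rw [hW] at hw
  refine ⟨⟨s.q, P, W, s.z, s.q_ne_zero, hP0,
    s.isCoprime.symm.of_isCoprime_of_dvd_right ⟨2, by rw [hP, mul_comm]⟩, by linarith,
    by linear_combination hz⟩, ?_⟩
  have : 0 < P ^ 2 := by positivity
  rw [Int.natAbs_lt_iff_sq_lt]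
  linarith

theorem exists_natAbs_z_lt_of_mul_eq_mul {m n u v : ℤ} (hq : s.q = 2 * (m * n))
    (hmn : IsCoprime m n) (huv : IsCoprime u v) (hmul : m * n = u * v)
    (hsq : m ^ 2 - 4 * n ^ 2 = u ^ 2 - v ^ 2) :
    ∃ s' : ConcordantSolution, s'.z.natAbs < s.z.natAbs := by
  have hu : u ≠ 0 := by rintro rfl; exact s.q_ne_zero (by rw [hq, hmul, zero_mul, mul_zero])
  obtain ⟨a, b, c, d, rfl, rfl, had, hc, hb⟩ :=
    exists_sq_add_sq_eq_sq_of_mul_eq_mul hu hmn huv hmul hsq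
  have habcd : a * b * (c * d) ≠ 0 := fun h => s.q_ne_zero (by rw [hq, h, mul_zero])
  simp only [mul_ne_zero_iff] at habcd
  obtain ⟨⟨ha, hb0⟩, -, hd⟩ := habcd
  refine ⟨⟨a, d, c, b, ha, hd, had, hc, hb⟩, ?_⟩
  rw [Int.natAbs_lt_iff_sq_lt, ← s.sq_add_sq, hq]
  have hp : 0 < s.p ^ 2 := by have := s.p_ne_zero; positivity
  have habd : 0 < (a * b * d) ^ 2 := by positivity
  nlinarith [mul_nonneg (sub_nonneg.mpr habd) (sq_nonneg c)]

theorem exists_natAbs_z_lt_of_odd (hp : Odd s.p) :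
    ∃ s' : ConcordantSolution, s'.z.natAbs < s.z.natAbs := by
  have hp0 := s.p_ne_zero
  have hz : 0 < |s.z| := by
    rw [abs_pos, ← sq_pos_iff, ← s.sq_add_sq]
    positivity
  have hw : 0 < |s.w| := by
    rw [abs_pos, ← sq_pos_iff, ← s.sq_add_four_mul_sq]
    positivity
  obtain ⟨u, v, hpu, hquv, -, huv, -, -⟩ := PythagoreanTriple.coprime_classification'
    (x := s.p) (y := s.q)
    (by rw [PythagoreanTriple]; linear_combination s.sq_add_sq - sq_abs s.z)
    (Int.isCoprime_iff_gcd_eq_one.mp s.isCoprime) (Int.odd_iff.mp hp) hz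
  obtain ⟨m, n, hpm, hqmn, -, hmn, hpar, -⟩ := PythagoreanTriple.coprime_classification'
    (x := s.p) (y := 2 * s.q)
    (by rw [PythagoreanTriple]; linear_combination s.sq_add_four_mul_sq - sq_abs s.w)
    (Int.isCoprime_iff_gcd_eq_one.mp ((Int.isCoprime_two_right.mpr hp).mul_right s.isCoprime))
    (Int.odd_iff.mp hp) hw
  rw [Int.isCoprime_iff_gcd_eq_one.symm] at huv hmn
  rcases hpar with ⟨hm, -⟩ | ⟨-, hn⟩
  · obtain ⟨M, rfl⟩ := Int.dvd_of_emod_eq_zero hm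
    have hq : s.q = 2 * (n * M) := by linarith
    exact s.exists_natAbs_z_lt_of_mul_eq_mul hq
      (hmn.symm.of_isCoprime_of_dvd_right (dvd_mul_left M 2)) huv.symm (by linarith)
      (by linear_combination hpm - hpu)
  · obtain ⟨N, rfl⟩ := Int.dvd_of_emod_eq_zero hn
    have hq : s.q = 2 * (m * N) := by linarith
    exact s.exists_natAbs_z_lt_of_mul_eq_mul hq
      (hmn.of_isCoprime_of_dvd_right (dvd_mul_left N 2)) huv (by linarith)
      (by linear_combination hpu - hpm)

theorem exists_natAbs_z_lt : ∃ s' : ConcordantSolution, s'.z.natAbs < s.z.natAbs :=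
  (Int.even_or_odd s.p).elim s.exists_natAbs_z_lt_of_even s.exists_natAbs_z_lt_of_odd

end ConcordantSolution

theorem ConcordantSolution.elim (s : ConcordantSolution) : False := by
  obtain ⟨s', hs'⟩ := s.exists_natAbs_z_lt
  exact s'.elim
termination_by s.z.natAbs

theorem Rat.eq_zero_of_sq_add_one_mul_sq_add_four_eq_sq {s v : ℚ}
    (h : (s ^ 2 + 1) * (s ^ 2 + 4) = v ^ 2) : s = 0 := by
  by_contra hs
  set p := s.num
  set q : ℤ := (s.den : ℤ)
  have hp : p ≠ 0 := Rat.num_ne_zero.mpr hs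
  have hq : q ≠ 0 := by positivity
  have hpq : IsCoprime p q := Int.isCoprime_iff_gcd_eq_one.mpr s.reduced
  obtain ⟨V, hV⟩ : IsSquare ((p ^ 2 + q ^ 2) * (p ^ 2 + 4 * q ^ 2)) := by
    rw [← Rat.isSquare_intCast_iff]
    refine ⟨v * q ^ 2, ?_⟩
    rw [← Rat.num_div_den s] at h
    field_simp at h
    push_cast
    linear_combination h
  have hcop := isCoprime_sq_add_sq_sq_add_four_mul_sq hpq
  obtain ⟨z, hz⟩ := Int.sq_of_isCoprime hcop (hV.trans (sq V).symm)
  obtain ⟨w, hw⟩ := Int.sq_of_isCoprime hcop.symm ((mul_comm _ _).trans (hV.trans (sq V).symm))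
  have hz' : p ^ 2 + q ^ 2 = z ^ 2 :=
    hz.resolve_right fun h => by nlinarith [sq_nonneg z, sq_pos_of_ne_zero hp]
  have hw' : p ^ 2 + 4 * q ^ 2 = w ^ 2 :=
    hw.resolve_right fun h => by nlinarith [sq_nonneg w, sq_pos_of_ne_zero hp]
  exact ConcordantSolution.elim ⟨p, q, z, w, hp, hq, hpq, hz', hw'⟩

/-- Here `b² - 4d²` is the discriminant `m` and `(2d + 2b)² - 4m` the norm of `2d + 2b - 2√m`. -/
theorem not_isSquare_discr_mul_norm {b d : ℚ} (hd : d ≠ 0)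
    (hm : ¬ IsSquare (b ^ 2 - 4 * d ^ 2)) :
    ¬ IsSquare ((b ^ 2 - 4 * d ^ 2) * ((2 * d + 2 * b) ^ 2 - 4 * (b ^ 2 - 4 * d ^ 2))) := by
  rintro ⟨r, hr⟩
  have hm0 : b ^ 2 - 4 * d ^ 2 ≠ 0 := fun h => hm ⟨0, by rw [h, mul_zero]⟩
  obtain ⟨s, hs⟩ : ∃ s, (b ^ 2 - 4 * d ^ 2) * s ^ 2 = 4 * d * (5 * d + 2 * b) := by
    refine ⟨r / (b ^ 2 - 4 * d ^ 2), ?_⟩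
    field_simp
    linear_combination -hr
  -- `v` is read off from the discriminant of `hs` as a quadratic equation in `b`
  have hs0 : s = 0 := Rat.eq_zero_of_sq_add_one_mul_sq_add_four_eq_sq
    (v := (s ^ 2 * b - 4 * d) / (2 * d)) (by field_simp; linear_combination -s ^ 2 * hs)
  have hb : 5 * d + 2 * b = 0 := by
    rw [hs0] at hs
    simpa [hd] using hs.symm
  exact hm ⟨3 * d / 2, by linear_combination (b - 5 * d / 2) * hb / 2⟩

section Galois

variable {F K : Type*} [Field F] [Field K] [Algebra F K]

theorem AlgEquiv.apply_eq_self_of_mem_zpowers {σ τ : K ≃ₐ[F] K} {x : K} (hx : σ x = x)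
    (hτ : τ ∈ Subgroup.zpowers σ) : τ x = x :=
  (Subgroup.zpowers_le (H := MulAction.stabilizer (K ≃ₐ[F] K) x)).mpr hx hτ

theorem AlgEquiv.eq_one_of_adjoin_eq_top {S : Set K} (hS : IntermediateField.adjoin F S = ⊤)
    {σ : K ≃ₐ[F] K} (h : ∀ x ∈ S, σ x = x) : σ = 1 := by
  have hle : IntermediateField.adjoin F S ≤ IntermediateField.fixedField (Subgroup.zpowers σ) :=
    IntermediateField.adjoin_le_iff.mpr fun x hx τ =>
      AlgEquiv.apply_eq_self_of_mem_zpowers (h x hx) τ.2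
  ext x
  exact hle (hS ▸ IntermediateField.mem_top) ⟨σ, Subgroup.mem_zpowers σ⟩

theorem IsGalois.mem_range_algebraMap_of_apply_eq_self [FiniteDimensional F K] [IsGalois F K]
    {σ : K ≃ₐ[F] K} (hσ : ∀ τ, τ ∈ Subgroup.zpowers σ) {x : K} (hx : σ x = x) :
    x ∈ Set.range (algebraMap F K) :=
  (IsGalois.mem_range_algebraMap_iff_fixed x).mpr fun τ =>
    AlgEquiv.apply_eq_self_of_mem_zpowers hx (hσ τ)

theorem IsGalois.apply_eq_neg_of_sq_eq_algebraMap [FiniteDimensional F K] [IsGalois F K]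
    {σ : K ≃ₐ[F] K} (hσ : ∀ τ, τ ∈ Subgroup.zpowers σ) {x : K} {r : F}
    (hx : x ^ 2 = algebraMap F K r) (hr : ¬ IsSquare r) : σ x = -x := by
  refine (sq_eq_sq_iff_eq_or_eq_neg.mp (by rw [← map_pow, hx, σ.commutes])).resolve_left
    fun h => hr ?_
  obtain ⟨s, rfl⟩ := IsGalois.mem_range_algebraMap_of_apply_eq_self hσ h
  exact ⟨s, (algebraMap F K).injective (by rw [map_mul, ← sq, hx])⟩

theorem AlgEquiv.apply_apply_eq_of_sq_eq_algebraMap (σ : K ≃ₐ[F] K) {x : K} {r : F}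
    (h : x ^ 2 = algebraMap F K r) : σ (σ x) = x := by
  rcases sq_eq_sq_iff_eq_or_eq_neg.mp (show σ x ^ 2 = x ^ 2 by rw [← map_pow, h, σ.commutes])
    with hx | hx
  · rw [hx, hx]
  · rw [hx, map_neg, hx, neg_neg]

theorem AlgEquiv.apply_apply_eq_of_apply_mul_eq (σ : K ≃ₐ[F] K) {x y : K}
    (hxy : σ x = y ∨ σ x = -y) (hfix : σ (x * y) = x * y) : σ (σ x) = x ∧ σ (σ y) = y := by
  rcases eq_or_ne y 0 with rfl | hy
  · obtain rfl : x = 0 := by simpa using hxy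
    simp
  rw [map_mul] at hfix
  rcases hxy with h | h
  · have hy' : σ y = x := mul_left_cancel₀ hy (by linear_combination hfix - σ y * h)
    exact ⟨by rw [h, hy'], by rw [hy', h]⟩
  · have hy' : σ y = -x := mul_left_cancel₀ hy (by linear_combination σ y * h - hfix)
    exact ⟨by rw [h, map_neg, hy', neg_neg], by rw [hy', map_neg, h, neg_neg]⟩

end Galois

theorem stmt_19_general (b c d : ℚ)
    (hd : d ^ 2 = c) (hd0 : d ≠ 0)
    (hm : ¬ IsSquare (b ^ 2 - 4 * c))
    (K : Type) [Field K] [NumberField K] (h4 : Module.finrank ℚ K = 4)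
    [IsGalois ℚ K] (hcyc : IsCyclic (K ≃ₐ[ℚ] K))
    (sm q₁ q₂ q₃ : K) (hsm : sm ^ 2 = ((b ^ 2 - 4 * c : ℚ) : K))
    (hq₁ : q₁ ^ 2 = (d : K))
    (hq₂ : q₂ ^ 2 = 2 * (d : K) + 2 * (b : K) - 2 * sm)
    (hq₃ : q₃ ^ 2 = 2 * (d : K) + 2 * (b : K) + 2 * sm)
    (hgen : IntermediateField.adjoin ℚ {sm, q₁, q₂, q₃} = (⊤ : IntermediateField ℚ K)) :
    False := by
  subst hd
  obtain ⟨σ, hσ⟩ := hcyc.exists_generator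
  have hσ2 : σ ^ 2 ≠ 1 := pow_ne_one_of_lt_orderOf two_ne_zero (by
    rw [orderOf_eq_card_of_forall_mem_zpowers hσ, IsGalois.card_aut_eq_finrank, h4]; norm_num)
  have hsm' : sm ^ 2 = algebraMap ℚ K (b ^ 2 - 4 * d ^ 2) := hsm.trans (eq_ratCast _ _).symm
  have hσsm : σ sm = -sm := IsGalois.apply_eq_neg_of_sq_eq_algebraMap hσ hsm' hm
  have hσq₂ : σ q₂ = q₃ ∨ σ q₂ = -q₃ := by
    rw [← sq_eq_sq_iff_eq_or_eq_neg, ← map_pow, hq₂, hq₃]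
    simp only [map_add, map_sub, map_mul, map_ofNat, map_ratCast, hσsm]
    ring
  have hnorm : (q₂ * q₃) ^ 2 =
      algebraMap ℚ K ((2 * d + 2 * b) ^ 2 - 4 * (b ^ 2 - 4 * d ^ 2)) := by
    rw [mul_pow, hq₂, hq₃, eq_ratCast]
    push_cast at hsm ⊢
    linear_combination -4 * hsm
  rcases sq_eq_sq_iff_eq_or_eq_neg.mp (show σ (q₂ * q₃) ^ 2 = (q₂ * q₃) ^ 2 by
    rw [← map_pow, hnorm, σ.commutes]) with ht | ht
  · obtain ⟨h₂, h₃⟩ := σ.apply_apply_eq_of_apply_mul_eq hσq₂ ht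
    refine hσ2 (AlgEquiv.eq_one_of_adjoin_eq_top hgen ?_)
    simp only [Set.mem_insert_iff, Set.mem_singleton_iff, forall_eq_or_imp, forall_eq, pow_two,
      AlgEquiv.mul_apply]
    exact ⟨σ.apply_apply_eq_of_sq_eq_algebraMap hsm',
      σ.apply_apply_eq_of_sq_eq_algebraMap (hq₁.trans (eq_ratCast _ _).symm), h₂, h₃⟩
  · obtain ⟨r, hr⟩ := IsGalois.mem_range_algebraMap_of_apply_eq_self hσ (x := q₂ * q₃ * sm)
      (by rw [map_mul, ht, hσsm]; ring)
    refine not_isSquare_discr_mul_norm hd0 hm ⟨r, (algebraMap ℚ K).injective ?_⟩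
    rw [map_mul, map_mul, hr, ← hnorm, ← hsm']
    ring

/-- Let `E : y² = x(x² + bx + c)` over `ℚ` with `c = d²` a nonzero rational square
(so `P = (d, y₀)` is a rational point of order 4), and `m = b² - 4c` not a square.
Suppose `P` is halved in a cyclic quartic extension `K` of `ℚ` containing
`F = ℚ(√m)`, so that `√d`, `√(2d + 2b - 2√m)` and `√(2d + 2b + 2√m)` all lie in `K`
and generate it. Then no such configuration exists. -/
theorem stmt_19 (W : WeierstrassCurve ℚ) [W.IsElliptic] (b c d : ℚ)
    (hW : W = { a₁ := 0, a₂ := b, a₃ := 0, a₄ := c, a₆ := 0 })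
    (hd : d ^ 2 = c) (hd0 : d ≠ 0)
    (hm : ¬ IsSquare (b ^ 2 - 4 * c))
    (K : Type) [Field K] [NumberField K] (h4 : Module.finrank ℚ K = 4)
    [IsGalois ℚ K] (hcyc : IsCyclic (K ≃ₐ[ℚ] K))
    (sm q₁ q₂ q₃ : K) (hsm : sm ^ 2 = ((b ^ 2 - 4 * c : ℚ) : K))
    (hq₁ : q₁ ^ 2 = (d : K))
    (hq₂ : q₂ ^ 2 = 2 * (d : K) + 2 * (b : K) - 2 * sm)
    (hq₃ : q₃ ^ 2 = 2 * (d : K) + 2 * (b : K) + 2 * sm)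
    (hgen : IntermediateField.adjoin ℚ {sm, q₁, q₂, q₃} = (⊤ : IntermediateField ℚ K)) :
    False :=
  stmt_19_general b c d hd hd0 hm K h4 hcyc sm q₁ q₂ q₃ hsm hq₁ hq₂ hq₃ hgen
end
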